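/- arXiv:2601.02095 — 2 statements merged into one kernel-verified Lean document; each statement's English description precedes it below -/
import Mathlib

section
/- Define w₁ = (α+1)/(3α+1), t₁ = (1-α)/(3α+1), and recursively wₖ = 1 - 2α/((1-α)·tₖ₋₁ + 2·wₖ₋₁ + 2α), tₖ = wₖ + (1-wₖ)·tₖ₋₁ for k ≥ 2, where 0 < α ≤ 1. Then for all k ≥ 1, 0 ≤ tₖ < 1 and 0 < wₖ ≤ 1, and the sequence (tₖ) is nondecreasing in k. -/
theorem stmt_4 (α : ℝ) (hα0 : 0 < α) (hα1 : α ≤ 1) (w t : ℕ → ℝ)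
    (hw1 : w 1 = (α + 1) / (3 * α + 1))
    (ht1 : t 1 = (1 - α) / (3 * α + 1))
    (hw : ∀ k, 2 ≤ k → w k = 1 - 2 * α / ((1 - α) * t (k - 1) + 2 * w (k - 1) + 2 * α))
    (ht : ∀ k, 2 ≤ k → t k = w k + (1 - w k) * t (k - 1)) :
    (∀ k, 1 ≤ k → (0 ≤ t k ∧ t k < 1) ∧ (0 < w k ∧ w k ≤ 1)) ∧
    (∀ k, 1 ≤ k → t k ≤ t (k + 1)) := by
  have key : ∀ k, 1 ≤ k → (0 ≤ t k ∧ t k < 1) ∧ (0 < w k ∧ w k < 1) := by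
    intro k hk
    induction k, hk using Nat.le_induction with
    | base =>
      have h3 : (0:ℝ) < 3 * α + 1 := by linarith
      refine ⟨⟨?_, ?_⟩, ?_, ?_⟩
      · rw [ht1]; exact div_nonneg (by linarith) h3.le
      · rw [ht1]; rw [div_lt_one h3]; linarith
      · rw [hw1]; exact div_pos (by linarith) h3
      · rw [hw1]; rw [div_lt_one h3]; linarith
    | succ n hn ih =>
      obtain ⟨⟨ht0, htlt⟩, hw0, hwlt⟩ := ih
      have hwk := hw (n + 1) (by omega)
      have htk := ht (n + 1) (by omega)
      simp only [Nat.add_sub_cancel] at hwk htk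
      have hD : 0 < (1 - α) * t n + 2 * w n + 2 * α := by nlinarith
      have hD2 : 2 * α < (1 - α) * t n + 2 * w n + 2 * α := by nlinarith
      have hq0 : 0 < 2 * α / ((1 - α) * t n + 2 * w n + 2 * α) :=
        div_pos (by linarith) hD
      have hq1 : 2 * α / ((1 - α) * t n + 2 * w n + 2 * α) < 1 :=
        (div_lt_one hD).mpr hD2
      have hw0' : 0 < w (n + 1) := by rw [hwk]; linarith
      have hw1' : w (n + 1) < 1 := by rw [hwk]; linarith
      refine ⟨⟨?_, ?_⟩, hw0', hw1'⟩
      · rw [htk]; nlinarith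
      · rw [htk]; nlinarith
  constructor
  · exact fun k hk => ⟨(key k hk).1, (key k hk).2.1, (key k hk).2.2.le⟩
  · intro k hk
    obtain ⟨⟨ht0, htlt⟩, hw0, hwlt⟩ := key k hk
    obtain ⟨_, hw0', hwlt'⟩ := key (k + 1) (by omega)
    have htk := ht (k + 1) (by omega)
    simp only [Nat.add_sub_cancel] at htk
    rw [htk]; nlinarith
end

section
/- Suppose a is an alternative, b is the optimal alternative, N is partitioned into N₁ and N₂ with |N₂| ≤ β·n and |N₁| ≥ (1-β)·n for β ∈ [0, 1/2], and suppose ∑_{i∈N₁} d(i,a) ≤ D·∑_{i∈N₁} d(i,b) for some D ≥ 1, where d is a metric. Then ∑_{i∈N} d(i,a) ≤ (D + (β/(1-β))·(1+D))·∑_{i∈N} d(i,b). -/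
theorem stmt_8 {X : Type*} [PseudoMetricSpace X] [DecidableEq X]
    (N N₁ N₂ : Finset X) (a b : X) (β D : ℝ)
    (hpart : N₁ ∪ N₂ = N) (hdisj : Disjoint N₁ N₂)
    (hβ0 : 0 ≤ β) (hβ1 : β ≤ 1 / 2)
    (hN2 : (N₂.card : ℝ) ≤ β * N.card)
    (hN1 : (1 - β) * N.card ≤ (N₁.card : ℝ))
    (hD : 1 ≤ D)
    (h1 : ∑ i ∈ N₁, dist i a ≤ D * ∑ i ∈ N₁, dist i b) :
    ∑ i ∈ N, dist i a ≤ (D + β / (1 - β) * (1 + D)) * ∑ i ∈ N, dist i b := by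
  have hβ' : (0:ℝ) < 1 - β := by linarith
  have hc : 0 ≤ β / (1 - β) * (1 + D) :=
    mul_nonneg (div_nonneg hβ0 hβ'.le) (by linarith)
  rcases N₁.eq_empty_or_nonempty with hE | hne
  · -- then (1-β) * n ≤ 0, so N is empty
    rw [hE, Finset.card_empty] at hN1
    push_cast at hN1
    have hn : (N.card : ℝ) ≤ 0 := by
      by_contra h
      push_neg at h
      nlinarith
    have : N = ∅ := Finset.card_eq_zero.mp (by exact_mod_cast le_antisymm (by exact_mod_cast hn) (Nat.zero_le _))
    simp [this]
  · obtain ⟨j, hjN₁, hjmin⟩ := N₁.exists_min_image (fun j => dist j a + dist j b) hne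
    set t := dist j a + dist j b with ht
    have ht0 : 0 ≤ t := by positivity
    set Sa₁ := ∑ i ∈ N₁, dist i a
    set Sb₁ := ∑ i ∈ N₁, dist i b
    set Sa₂ := ∑ i ∈ N₂, dist i a
    set Sb₂ := ∑ i ∈ N₂, dist i b
    have hSb₁ : 0 ≤ Sb₁ := Finset.sum_nonneg fun i _ => dist_nonneg
    have hSb₂ : 0 ≤ Sb₂ := Finset.sum_nonneg fun i _ => dist_nonneg
    -- |N₁| * t ≤ ∑_{N₁} (dist i a + dist i b) ≤ (1+D) Sb₁
    have hcard : (N₁.card : ℝ) * t ≤ Sa₁ + Sb₁ := by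
      have := Finset.card_nsmul_le_sum N₁ (fun i => dist i a + dist i b) t hjmin
      rw [nsmul_eq_mul] at this
      simpa [Sa₁, Sb₁, Finset.sum_add_distrib] using this
    have hN1t : (N₁.card : ℝ) * t ≤ (1 + D) * Sb₁ := by nlinarith
    -- triangle inequality on N₂
    have hA : Sa₂ ≤ Sb₂ + (N₂.card : ℝ) * t := by
      have : ∀ i ∈ N₂, dist i a ≤ dist i b + t := by
        intro i _
        calc dist i a ≤ dist i j + dist j a := dist_triangle i j a
          _ ≤ (dist i b + dist b j) + dist j a := by
              linarith [dist_triangle i b j]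
          _ = dist i b + t := by rw [ht, dist_comm b j]; ring
      calc Sa₂ ≤ ∑ i ∈ N₂, (dist i b + t) := Finset.sum_le_sum this
        _ = Sb₂ + (N₂.card : ℝ) * t := by
            rw [Finset.sum_add_distrib, Finset.sum_const, nsmul_eq_mul]
    -- bound |N₂| t
    have hB : (N₂.card : ℝ) * t ≤ β / (1 - β) * (1 + D) * Sb₁ := by
      have h2 : (N₂.card : ℝ) * t ≤ β * N.card * t :=
        mul_le_mul_of_nonneg_right hN2 ht0
      have h3 : β * ((1 - β) * N.card * t) ≤ β * ((N₁.card : ℝ) * t) := by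
        apply mul_le_mul_of_nonneg_left (mul_le_mul_of_nonneg_right hN1 ht0) hβ0
      have h4 : β * ((N₁.card : ℝ) * t) ≤ β * ((1 + D) * Sb₁) :=
        mul_le_mul_of_nonneg_left hN1t hβ0
      rw [div_mul_eq_mul_div, div_mul_eq_mul_div, le_div_iff₀ hβ']
      nlinarith
    -- combine
    have hsplit : ∀ f : X → ℝ, ∑ i ∈ N, f i = ∑ i ∈ N₁, f i + ∑ i ∈ N₂, f i := by
      intro f; rw [← hpart, Finset.sum_union hdisj]
    rw [hsplit (fun i => dist i a), hsplit (fun i => dist i b)]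
    show Sa₁ + Sa₂ ≤ (D + β / (1 - β) * (1 + D)) * (Sb₁ + Sb₂)
    nlinarith [mul_nonneg hc hSb₂]
end
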